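/- Let T : X → X be nonexpansive and super-regular, with x_T ∈ X the point such that for every s > 0 the iterates Tⁿ converge uniformly on B_s(0) to the constant x_T. Then for all ε > 0 and s > 0 there exist δ > 0 and an integer n₀ ≥ 2 such that for every nonexpansive map T₁ : X → X with ρ(T₁, T) < δ, every integer n ≥ n₀ and every x ∈ X with ‖x‖ ≤ s, one has ‖T₁ⁿx − x_T‖ < ε. -/

import Mathlib

open RealInnerProductSpace Filter

variable {X : Type*} [NormedAddCommGroup X] [InnerProductSpace ℝ X] [CompleteSpace X]

/-- `T` is nonexpansive. -/
def Nonexpansive (T : X → X) : Prop := ∀ x y : X, ‖T x - T y‖ ≤ ‖x - y‖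

/-- `T` is firmly nonexpansive. -/
def FirmlyNonexpansive (T : X → X) : Prop :=
  ∀ x y : X, ‖T x - T y‖ ^ 2 ≤ ⟪x - y, T x - T y⟫

/-- `‖T₁ - T₂‖ₙ = sup_{‖x‖ ≤ n} ‖T₁ x - T₂ x‖`. -/
noncomputable def ballSup (T₁ T₂ : X → X) (n : ℕ) : ℝ :=
  sSup {r : ℝ | ∃ x : X, ‖x‖ ≤ (n : ℝ) ∧ r = ‖T₁ x - T₂ x‖}

/-- The metric `ρ` on nonexpansive maps. -/
noncomputable def rho (T₁ T₂ : X → X) : ℝ :=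
  ∑' n : ℕ, (1 / 2 ^ (n + 1)) *
    (ballSup T₁ T₂ (n + 1) / (1 + ballSup T₁ T₂ (n + 1)))

/-- The metric `ρ̂` on firmly nonexpansive maps: `ρ̂(T₁,T₂) = ρ(2T₁ - Id, 2T₂ - Id)`. -/
noncomputable def rhoHat (T₁ T₂ : X → X) : ℝ :=
  rho (fun x => (2 : ℝ) • T₁ x - x) (fun x => (2 : ℝ) • T₂ x - x)

/-- `T` is super-regular with limit point `xT`. -/
def SuperRegularAt (T : X → X) (xT : X) : Prop :=
  ∀ s : ℝ, 0 < s → ∀ ε : ℝ, 0 < ε → ∃ N : ℕ, ∀ n ≥ N, ∀ x : X, ‖x‖ ≤ s → ‖T^[n] x - xT‖ < ε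

/-- `T` is super-regular. -/
def SuperRegular (T : X → X) : Prop := ∃ xT : X, SuperRegularAt T xT

/-- `T` is a (Banach) contraction. -/
def Contraction (T : X → X) : Prop :=
  ∃ l : ℝ, 0 ≤ l ∧ l < 1 ∧ ∀ x y : X, ‖T x - T y‖ ≤ l * ‖x - y‖

/-! If `ρ(T₁, T)` is small, a single term of the series defining `ρ` already forces `T₁` to be
uniformly close to `T` on a large ball. So for a fixed number of steps the `T₁`-orbits of points of a
ball `B_R` shadow their `T`-orbits, with an error growing only linearly since `T` is nonexpansive.
Choosing `n₀` from super-regularity on `B_R`, every `T₁ⁿ` with `n₀ ≤ n < 2n₀` maps `B_R` into the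
`ε`-ball around `x_T`, which lies in `B_R`; splitting off blocks of `n₀` steps gives all `n ≥ n₀`. -/

open Set Metric

theorem Set.mapsTo_iterate_of_forall_mem_Ico {α : Type*} {f : α → α} {A B : Set α} {n₀ : ℕ}
    (hn₀ : 0 < n₀) (hAB : A ⊆ B) (h : ∀ n ∈ Ico n₀ (2 * n₀), MapsTo f^[n] B A) :
    ∀ n ≥ n₀, MapsTo f^[n] B A := by
  intro n
  induction n using Nat.strong_induction_on with
  | _ n ih =>
    intro hn
    rcases lt_or_ge n (2 * n₀) with hlt | hge
    · exact h n ⟨hn, hlt⟩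
    · have hsplit : n = (n - n₀) + n₀ := by omega
      rw [hsplit, Function.iterate_add]
      exact (ih (n - n₀) (by omega) (by omega)).comp ((h n₀ ⟨le_rfl, by omega⟩).mono_right hAB)

section Shadowing

variable {α : Type*} [PseudoMetricSpace α] {f g : α → α}

theorem LipschitzWith.dist_iterate_le_add_mul (hf : LipschitzWith 1 f) (y a : α) (n : ℕ) :
    dist (f^[n] y) a ≤ dist y a + n * dist (f a) a := by
  induction n with
  | zero => simp
  | succ n ih =>
    rw [Function.iterate_succ_apply']
    calc dist (f (f^[n] y)) a ≤ dist (f (f^[n] y)) (f a) + dist (f a) a := dist_triangle _ _ _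
      _ ≤ dist (f^[n] y) a + dist (f a) a := by gcongr; simpa using hf.dist_le_mul (f^[n] y) a
      _ ≤ dist y a + (n + 1 : ℕ) * dist (f a) a := by push_cast; linarith

theorem LipschitzWith.dist_iterate_le_mul (hf : LipschitzWith 1 f) {y : α} {γ : ℝ} {n : ℕ}
    (hclose : ∀ i < n, ∀ z, dist z (f^[i] y) ≤ i * γ → dist (g z) (f z) ≤ γ) :
    dist (g^[n] y) (f^[n] y) ≤ n * γ := by
  induction n with
  | zero => simp
  | succ n ih =>
    have hn : dist (g^[n] y) (f^[n] y) ≤ n * γ := ih fun i hi => hclose i (by omega)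
    rw [Function.iterate_succ_apply', Function.iterate_succ_apply']
    calc dist (g (g^[n] y)) (f (f^[n] y))
        ≤ dist (g (g^[n] y)) (f (g^[n] y)) + dist (f (g^[n] y)) (f (f^[n] y)) := dist_triangle _ _ _
      _ ≤ γ + n * γ := by
        gcongr
        · exact hclose n n.lt_succ_self _ hn
        · have hfn := hf.dist_le_mul (g^[n] y) (f^[n] y)
          rw [NNReal.coe_one, one_mul] at hfn
          exact hfn.trans hn
      _ = (n + 1 : ℕ) * γ := by push_cast; ring

end Shadowing

section NormedGroup

variable {E : Type*} [NormedAddCommGroup E]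

theorem Nonexpansive.lipschitzWith {T : E → E} (hT : Nonexpansive T) : LipschitzWith 1 T :=
  LipschitzWith.mk_one fun x y => by simpa [dist_eq_norm] using hT x y

theorem Nonexpansive.norm_iterate_sub_iterate_le {T T₁ : E → E} (hT : Nonexpansive T) {R γ : ℝ}
    {m : ℕ} (hγ : 0 ≤ γ) (hclose : ∀ z, ‖z‖ ≤ R + m * (‖T 0‖ + γ) → ‖T₁ z - T z‖ ≤ γ) {y : E}
    (hy : ‖y‖ ≤ R) : ‖T₁^[m] y - T^[m] y‖ ≤ m * γ := by
  rw [← dist_eq_norm]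
  refine hT.lipschitzWith.dist_iterate_le_mul fun i hi z hz => ?_
  have horbit := hT.lipschitzWith.dist_iterate_le_add_mul y 0 i
  simp only [dist_zero_right] at horbit
  have hi' : (i : ℝ) ≤ m := by exact_mod_cast hi.le
  rw [dist_eq_norm]
  refine hclose z ?_
  calc ‖z‖ ≤ dist z (T^[i] y) + ‖T^[i] y‖ := by
        simpa only [dist_zero_right] using dist_triangle z (T^[i] y) 0
    _ ≤ R + i * (‖T 0‖ + γ) := by linarith
    _ ≤ R + m * (‖T 0‖ + γ) := by gcongr

-- The set may be unbounded, but then `sSup` is `0`.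
theorem ballSup_nonneg (T₁ T₂ : E → E) (n : ℕ) : 0 ≤ ballSup T₁ T₂ n :=
  Real.sSup_nonneg fun _ ⟨_, _, hr⟩ => hr ▸ norm_nonneg _

theorem norm_sub_le_ballSup {T₁ T₂ : E → E} (h₁ : Nonexpansive T₁) (h₂ : Nonexpansive T₂) {n : ℕ}
    {x : E} (hx : ‖x‖ ≤ n) : ‖T₁ x - T₂ x‖ ≤ ballSup T₁ T₂ n := by
  refine le_csSup ⟨2 * n + ‖T₁ 0 - T₂ 0‖, ?_⟩ ⟨x, hx, rfl⟩
  rintro _ ⟨z, hz, rfl⟩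
  have h₁z : ‖T₁ z - T₁ 0‖ ≤ ‖z‖ := by simpa using h₁ z 0
  have h₂z : ‖T₂ 0 - T₂ z‖ ≤ ‖z‖ := by simpa using h₂ 0 z
  calc ‖T₁ z - T₂ z‖ = ‖(T₁ z - T₁ 0) + (T₁ 0 - T₂ 0) + (T₂ 0 - T₂ z)‖ := by abel_nf
    _ ≤ ‖T₁ z - T₁ 0‖ + ‖T₁ 0 - T₂ 0‖ + ‖T₂ 0 - T₂ z‖ := norm_add₃_le
    _ ≤ 2 * n + ‖T₁ 0 - T₂ 0‖ := by linarith

theorem ballSup_term_le_rho (T₁ T₂ : E → E) (n : ℕ) :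
    1 / 2 ^ (n + 1) * (ballSup T₁ T₂ (n + 1) / (1 + ballSup T₁ T₂ (n + 1))) ≤ rho T₁ T₂ := by
  have hfrac : ∀ m, 0 ≤ ballSup T₁ T₂ (m + 1) / (1 + ballSup T₁ T₂ (m + 1)) ∧
      ballSup T₁ T₂ (m + 1) / (1 + ballSup T₁ T₂ (m + 1)) ≤ 1 := fun m => by
    have := ballSup_nonneg T₁ T₂ (m + 1)
    exact ⟨by positivity, (div_le_one (by linarith)).2 (by linarith)⟩
  have hsum : Summable fun m : ℕ =>
      1 / 2 ^ (m + 1) * (ballSup T₁ T₂ (m + 1) / (1 + ballSup T₁ T₂ (m + 1))) := by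
    refine Summable.of_nonneg_of_le (fun m => mul_nonneg (by positivity) (hfrac m).1)
      (fun m => mul_le_of_le_one_right (by positivity) (hfrac m).2) ?_
    simpa [one_div, ← inv_pow] using (summable_nat_add_iff 1).2 summable_geometric_two
  exact hsum.le_tsum n fun m _ => mul_nonneg (by positivity) (hfrac m).1

theorem exists_pos_forall_rho_lt_norm_sub_lt (r : ℝ) {γ : ℝ} (hγ : 0 < γ) :
    ∃ δ > 0, ∀ T₁ T₂ : E → E, Nonexpansive T₁ → Nonexpansive T₂ → rho T₁ T₂ < δ →
      ∀ x : E, ‖x‖ ≤ r → ‖T₁ x - T₂ x‖ < γ := by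
  set k := ⌈r⌉₊
  refine ⟨1 / 2 ^ (k + 1) * (γ / (1 + γ)), by positivity, fun T₁ T₂ h₁ h₂ hρ x hx => ?_⟩
  by_contra! hfar
  have hx' : ‖x‖ ≤ ((k + 1 : ℕ) : ℝ) := by push_cast; linarith [Nat.le_ceil r]
  have hsup : γ ≤ ballSup T₁ T₂ (k + 1) := hfar.trans (norm_sub_le_ballSup h₁ h₂ hx')
  have hfrac : γ / (1 + γ) ≤ ballSup T₁ T₂ (k + 1) / (1 + ballSup T₁ T₂ (k + 1)) := by
    rw [div_le_div_iff₀ (by linarith) (by linarith)]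
    nlinarith
  exact hρ.not_ge
    ((mul_le_mul_of_nonneg_left hfrac (by positivity)).trans (ballSup_term_le_rho T₁ T₂ k))

end NormedGroup

/-- stability of iterate convergence near a super-regular nonexpansive map. -/
theorem superRegular_stability (T : X → X) (hT : Nonexpansive T) (xT : X)
    (hsr : SuperRegularAt T xT) (ε s : ℝ) (hε : 0 < ε) (hs : 0 < s) :
    ∃ (δ : ℝ) (n₀ : ℕ), 0 < δ ∧ 2 ≤ n₀ ∧
      ∀ T₁ : X → X, Nonexpansive T₁ → rho T₁ T < δ →
        ∀ n ≥ n₀, ∀ x : X, ‖x‖ ≤ s → ‖T₁^[n] x - xT‖ < ε := by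
  set R := s + ‖xT‖ + ε
  obtain ⟨N, hN⟩ := hsr R (by positivity) (ε / 2) (by positivity)
  set n₀ := max N 2
  have hn₀ : (0 : ℝ) < n₀ := by positivity
  set γ := ε / (4 * n₀)
  obtain ⟨δ, hδ, hclose⟩ :=
    exists_pos_forall_rho_lt_norm_sub_lt (E := X) (R + 2 * n₀ * (‖T 0‖ + γ)) (show 0 < γ by positivity)
  refine ⟨δ, n₀, hδ, le_max_right _ _, fun T₁ hT₁ hρ n hn x hx => ?_⟩
  have hblock : ∀ m ∈ Ico n₀ (2 * n₀), MapsTo T₁^[m] (closedBall 0 R) (ball xT ε) := by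
    rintro m ⟨hm₁, hm₂⟩ y hy
    rw [mem_closedBall_zero_iff] at hy
    have hm : (m : ℝ) ≤ 2 * n₀ := by exact_mod_cast hm₂.le
    have htrack : ‖T₁^[m] y - T^[m] y‖ ≤ m * γ :=
      hT.norm_iterate_sub_iterate_le (by positivity)
        (fun z hz => (hclose T₁ T hT₁ hT hρ z (hz.trans (by gcongr))).le) hy
    have hmγ : m * γ ≤ ε / 2 := by
      calc m * γ ≤ 2 * n₀ * γ := by gcongr
        _ = ε / 2 := by simp only [γ]; field_simp; ring
    have hTm := hN m ((le_max_left _ _).trans hm₁) y hy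
    rw [mem_ball, dist_eq_norm]
    linarith [norm_sub_le_norm_sub_add_norm_sub (T₁^[m] y) (T^[m] y) xT]
  have hball : ball xT ε ⊆ closedBall 0 R :=
    ball_subset_closedBall.trans (closedBall_subset_closedBall' (by rw [dist_zero_right]; linarith))
  have hxR : x ∈ closedBall 0 R := mem_closedBall_zero_iff.2 (by linarith [norm_nonneg xT])
  simpa only [mem_ball, dist_eq_norm] using
    Set.mapsTo_iterate_of_forall_mem_Ico (by omega) hball hblock n hn hxR
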